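/- For every m ≥ 2 and all indices i_1, …, i_m ∈ {1,…,n}, the element r_{i_1 i_2 ⋯ i_m} also satisfies the left-handed expansion r_{i_1 i_2 ⋯ i_m} = ∑_{j=1}^{m} (−1)^{j+1} x_{i_j} ⊗ r_{i_1 ⋯ î_j ⋯ i_m} in V^{⊗m}. -/

import Mathlib

/-!
Expand `r_{i_1 ⋯ i_m}` on the right by its definition and each `r_{i_1 ⋯ î_j ⋯ i_m}` on the
left by induction; expand the claimed right-hand side `∑ ± x_{i_p} ⊗ r_{i_1 ⋯ î_p ⋯ i_m}` by
the definition of the inner `r`. Both become double sums of terms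
`± x_{i_a} ⊗ r_{i_1 ⋯ î_a ⋯ î_b ⋯ i_m} ⊗ x_{i_b}` over ordered pairs of removed positions, and
they agree term by term: removing the same two positions in the other order is the involution
`(j, l) ↦ (j.succAbove l, l.predAbove j)`, and the two signs have equal exponents.
-/

open scoped TensorProduct
open PiTensorProduct

namespace OrePaper

variable (k : Type*) [Field k] (V : Type*) [AddCommGroup V] [Module k V]

/-- The canonical isomorphism `V^{⊗a} ⊗ V^{⊗b} ≃ V^{⊗(a+b)}`. -/
noncomputable abbrev mulPow (a b : ℕ) :
    ((⨂[k]^a V) ⊗[k] (⨂[k]^b V)) ≃ₗ[k] ⨂[k]^(a+b) V :=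
  TensorPower.mulEquiv

variable {k V}

/-- Identification of `V` with `V^{⊗1}`. -/
noncomputable def toPow1 : V ≃ₗ[k] ⨂[k]^1 V :=
  (PiTensorProduct.subsingletonEquiv (s := fun _ : Fin 1 => V) (0 : Fin 1)).symm

/-- `w ⊗ v ∈ V^{⊗(m+1)}` for `w ∈ V^{⊗m}`, `v ∈ V`. -/
noncomputable def append {m : ℕ} (w : ⨂[k]^m V) (v : V) : ⨂[k]^(m+1) V :=
  mulPow k V m 1 (w ⊗ₜ[k] toPow1 v)

/-- `v ⊗ w ∈ V^{⊗(m+1)}` for `v ∈ V`, `w ∈ V^{⊗m}`. -/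
noncomputable def prepend {m : ℕ} (v : V) (w : ⨂[k]^m V) : ⨂[k]^(m+1) V :=
  TensorPower.cast k V (Nat.add_comm 1 m) (mulPow k V 1 m (toPow1 v ⊗ₜ[k] w))

/-- The elements `r_{i_1 i_2 ⋯ i_m} ∈ V^{⊗m}`:
`r_{i_1 i_2} = x_{i_1} ⊗ x_{i_2} − x_{i_2} ⊗ x_{i_1}` and, recursively for `m ≥ 3`,
`r_{i_1 ⋯ i_m} = ∑_{j=1}^{m} (−1)^{m−j} r_{i_1 ⋯ î_j ⋯ i_m} ⊗ x_{i_j}`.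
(For a single index we set `r_i = x_i`, which is the convention making the left-handed
expansion hold also for `m = 2`.) -/
noncomputable def rElt {n : ℕ} (x : Fin n → V) : (m : ℕ) → (Fin m → Fin n) → ⨂[k]^m V
  | 0, _ => 0
  | 1, ι => toPow1 (x (ι 0))
  | 2, ι => append (toPow1 (x (ι 0))) (x (ι 1)) - append (toPow1 (x (ι 1))) (x (ι 0))
  | (m+3), ι => ∑ j : Fin (m+3),
      ((-1 : k)^((m+2) - (j : ℕ))) • append (rElt x (m+2) (ι ∘ j.succAbove)) (x (ι j))

theorem toPow1_apply (v : V) : (toPow1 v : ⨂[k]^1 V) = tprod k (fun _ => v) := by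
  rw [toPow1, LinearEquiv.symm_apply_eq, subsingletonEquiv_apply_tprod]

theorem append_tprod {m : ℕ} (f : Fin m → V) (v : V) :
    append (tprod k f) v = PiTensorProduct.tprod k (Fin.snoc f v) := by
  rw [append, toPow1_apply, ← TensorPower.gMul_def, TensorPower.tprod_mul_tprod,
    Fin.append_right_eq_snoc]

theorem prepend_tprod {m : ℕ} (v : V) (f : Fin m → V) :
    prepend v (tprod k f) = PiTensorProduct.tprod k (Fin.cons v f) := by
  rw [prepend, toPow1_apply, ← TensorPower.gMul_def, TensorPower.tprod_mul_tprod,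
    TensorPower.cast_tprod, Fin.append_left_eq_cons]
  rfl

theorem prepend_toPow1 (v u : V) : prepend v (toPow1 (k := k) u) = append (toPow1 v) u := by
  rw [toPow1_apply, toPow1_apply, prepend_tprod, append_tprod]
  congr 1
  ext i
  fin_cases i <;> rfl

noncomputable def appendL {m : ℕ} (v : V) : (⨂[k]^m V) →ₗ[k] ⨂[k]^(m+1) V :=
  (mulPow k V m 1).toLinearMap ∘ₗ (TensorProduct.mk k _ _).flip (toPow1 v)

noncomputable def prependL {m : ℕ} (v : V) : (⨂[k]^m V) →ₗ[k] ⨂[k]^(m+1) V :=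
  (TensorPower.cast k V (Nat.add_comm 1 m)).toLinearMap ∘ₗ (mulPow k V 1 m).toLinearMap ∘ₗ
    TensorProduct.mk k _ _ (toPow1 v)

theorem appendL_apply {m : ℕ} (v : V) (w : ⨂[k]^m V) : appendL v w = append w v := rfl

theorem prependL_apply {m : ℕ} (v : V) (w : ⨂[k]^m V) : prependL v w = prepend v w := rfl

theorem append_smul {m : ℕ} (c : k) (w : ⨂[k]^m V) (v : V) :
    append (c • w) v = c • append w v :=
  map_smul (appendL v) c w

theorem append_sum {m : ℕ} {α : Type*} (s : Finset α) (f : α → ⨂[k]^m V) (v : V) :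
    append (∑ a ∈ s, f a) v = ∑ a ∈ s, append (f a) v :=
  map_sum (appendL v) f s

theorem prepend_smul {m : ℕ} (c : k) (v : V) (w : ⨂[k]^m V) :
    prepend v (c • w) = c • prepend v w :=
  map_smul (prependL v) c w

theorem prepend_sum {m : ℕ} {α : Type*} (s : Finset α) (v : V) (f : α → ⨂[k]^m V) :
    prepend v (∑ a ∈ s, f a) = ∑ a ∈ s, prepend v (f a) :=
  map_sum (prependL v) f s

theorem append_prepend {m : ℕ} (v : V) (w : ⨂[k]^m V) (u : V) :
    append (prepend v w) u = prepend v (append w u) := by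
  suffices (appendL u).comp (prependL v) = (prependL v).comp (appendL (k := k) (m := m) u) from
    LinearMap.congr_fun this w
  ext f
  simp only [LinearMap.compMultilinearMap_apply, LinearMap.comp_apply, appendL_apply,
    prependL_apply, prepend_tprod, append_tprod, Fin.cons_snoc_eq_snoc_cons]

def removeTwoSwap (m : ℕ) : Equiv.Perm (Fin (m+2) × Fin (m+1)) :=
  Function.Involutive.toPerm (fun p => (p.1.succAbove p.2, p.2.predAbove p.1)) fun p => by
    simp only [Fin.succAbove_succAbove_predAbove, Fin.predAbove_predAbove_succAbove]

theorem removeTwoSwap_apply {m : ℕ} (j : Fin (m+2)) (l : Fin (m+1)) :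
    removeTwoSwap m (j, l) = (j.succAbove l, l.predAbove j) :=
  rfl

theorem val_succAbove_add_sub_val_predAbove {m : ℕ} (j : Fin (m+2)) (l : Fin (m+1)) :
    (j.succAbove l : ℕ) + (m - l.predAbove j) = (m + 1 - j) + l := by
  have := j.isLt
  have := l.isLt
  simp only [Fin.succAbove, Fin.predAbove, Fin.lt_def, Fin.val_castSucc, apply_dite Fin.val,
    Fin.val_pred, Fin.coe_castPred, apply_ite Fin.val, Fin.val_succ]
  split_ifs <;> omega

variable {n : ℕ} (x : Fin n → V)

theorem rElt_succ_succ (m : ℕ) (ι : Fin (m+2) → Fin n) :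
    rElt (k := k) x (m+2) ι = ∑ j : Fin (m+2),
      ((-1 : k)^((m+1) - (j : ℕ))) • append (rElt x (m+1) (ι ∘ j.succAbove)) (x (ι j)) := by
  cases m with
  | succ m => rfl
  | zero =>
    rw [Fin.sum_univ_two]
    simp only [rElt]
    norm_num
    abel

theorem rElt_two_eq_sum_prepend (ι : Fin 2 → Fin n) :
    rElt (k := k) x 2 ι = ∑ j : Fin 2,
      ((-1 : k)^((j : ℕ))) • prepend (x (ι j)) (rElt x 1 (ι ∘ j.succAbove)) := by
  simp only [rElt, Fin.sum_univ_two, prepend_toPow1]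
  norm_num
  abel

theorem rElt_eq_sum_prepend (m : ℕ) (ι : Fin (m+2) → Fin n) :
    rElt (k := k) x (m+2) ι = ∑ j : Fin (m+2),
      ((-1 : k)^((j : ℕ))) • prepend (x (ι j)) (rElt x (m+1) (ι ∘ j.succAbove)) := by
  induction m with
  | zero => exact rElt_two_eq_sum_prepend x ι
  | succ m ih =>
    let term : Fin (m+3) × Fin (m+2) → ⨂[k]^(m+3) V := fun p =>
      ((-1 : k)^((p.1 : ℕ) + (m + 1 - p.2))) •
        prepend (x (ι p.1)) (append (rElt x (m+1) (ι ∘ p.1.succAbove ∘ p.2.succAbove))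
          (x (ι (p.1.succAbove p.2))))
    have expand_right : ∑ j : Fin (m+3), ((-1 : k)^((j : ℕ))) •
        prepend (x (ι j)) (rElt x (m+2) (ι ∘ j.succAbove)) = ∑ p, term p := by
      rw [Fintype.sum_prod_type]
      refine Finset.sum_congr rfl fun j _ => ?_
      rw [rElt_succ_succ, prepend_sum, Finset.smul_sum]
      refine Finset.sum_congr rfl fun l _ => ?_
      rw [prepend_smul, smul_smul, ← pow_add]
      rfl
    have expand_left : rElt x (m+3) ι = ∑ p, term (removeTwoSwap (m+1) p) := by
      rw [rElt_succ_succ, Fintype.sum_prod_type]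
      refine Finset.sum_congr rfl fun j _ => ?_
      rw [ih, append_sum, Finset.smul_sum]
      refine Finset.sum_congr rfl fun l _ => ?_
      have hι : ι ∘ (j.succAbove l).succAbove ∘ (l.predAbove j).succAbove
          = ι ∘ j.succAbove ∘ l.succAbove :=
        (Fin.removeNth_removeNth_eq_swap ι l j).symm
      rw [removeTwoSwap_apply]
      simp only [term, hι, Fin.succAbove_succAbove_predAbove, val_succAbove_add_sub_val_predAbove,
        append_smul, append_prepend, smul_smul, ← pow_add]
      rfl
    rw [expand_left, expand_right, Equiv.sum_comp]

theorem lemma_4_2_a_general {n : ℕ} (b : Module.Basis (Fin n) k V)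
    (m : ℕ) (ι : Fin (m+2) → Fin n) :
    rElt (k := k) (fun i => b i) (m+2) ι
      = ∑ j : Fin (m+2),
          ((-1 : k)^((j : ℕ))) •
            (prepend (b (ι j)) (rElt (k := k) (fun i => b i) (m+1) (ι ∘ j.succAbove))
              : ⨂[k]^(m+2) V) :=
  rElt_eq_sum_prepend _ m ι

/-- **Lemma 4.2(a)**: the left-handed expansion
`r_{i_1 ⋯ i_m} = ∑_{j=1}^{m} (−1)^{j+1} x_{i_j} ⊗ r_{i_1 ⋯ î_j ⋯ i_m}` for all `m ≥ 2`. -/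
theorem lemma_4_2_a {n : ℕ} (hn : 2 ≤ n) (b : Module.Basis (Fin n) k V)
    (m : ℕ) (ι : Fin (m+2) → Fin n) :
    rElt (k := k) (fun i => b i) (m+2) ι
      = ∑ j : Fin (m+2),
          ((-1 : k)^((j : ℕ))) •
            (prepend (b (ι j)) (rElt (k := k) (fun i => b i) (m+1) (ι ∘ j.succAbove))
              : ⨂[k]^(m+2) V) :=
  lemma_4_2_a_general b m ι

end OrePaper
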